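/- With parameters 𝔞 = α+iβ, 𝔟 = γ+iδ, 𝔠 = α-iβ, 𝔡 = γ-iδ where α, β, γ, δ > 0, the coefficient u_n = -A_{n-1}C_n of the modified Bannai–Ito recurrence is a strictly positive real number for every integer n ≥ 1; explicitly for n even, u_n = n(n+4α+4γ+2)|n+2(α+γ+i(β+δ))+1|²/(4(n+2α+2γ+1)²), and for n odd, u_n = (n+4α+1)(n+4γ+1)|n+2(α+γ+i(β-δ))+1|²/(4(n+2α+2γ+1)²). -/

import Mathlib

open Complex

/-- Bannai–Ito recurrence coefficient `Aₙ`. -/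
noncomputable def Acoef (a b c d : ℂ) (n : ℕ) : ℂ :=
  if Even n then
    ((n : ℂ) + 2*a + 2*c + 2) * ((n : ℂ) + 2*a + 2*d + 2) / (2 * ((n : ℂ) + a + b + c + d + 2))
  else
    ((n : ℂ) + 2*a + 2*b + 2) * ((n : ℂ) + 2*a + 2*b + 2*c + 2*d + 3)
      / (2 * ((n : ℂ) + a + b + c + d + 2))

/-- Bannai–Ito recurrence coefficient `Cₙ`. -/
noncomputable def Ccoef (a b c d : ℂ) (n : ℕ) : ℂ :=
  if Even n then
    -((n : ℂ) * ((n : ℂ) + 2*c + 2*d + 1)) / (2 * ((n : ℂ) + a + b + c + d + 1))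
  else
    -(((n : ℂ) + 2*b + 2*c + 1) * ((n : ℂ) + 2*b + 2*d + 1))
      / (2 * ((n : ℂ) + a + b + c + d + 1))

/-- Off-diagonal recurrence coefficient `uₙ = -Aₙ₋₁Cₙ` of the modified
Bannai–Ito polynomials. -/
noncomputable def ucoef (a b c d : ℂ) (n : ℕ) : ℂ :=
  -(Acoef a b c d (n - 1)) * Ccoef a b c d n

/-! In both parities the two denominators of `-Aₙ₋₁Cₙ` are the same number
`n + 𝔞 + 𝔟 + 𝔠 + 𝔡 + 1`. When `𝔠 = 𝔞̄` and `𝔡 = 𝔟̄` it is real, and the four numerator factors pair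
up: for `n` even as `n (n + 2 + 2(𝔞 + 𝔟 + 𝔠 + 𝔡)) · z z̄` with `z = n + 1 + 2(𝔞 + 𝔟)`, for `n` odd as
`(n + 1 + 4 Re 𝔞)(n + 1 + 4 Re 𝔟) · z z̄` with `z = n + 1 + 2(𝔞 + 𝔡)`. So `uₙ` is real, and positive
as soon as `Re 𝔞, Re 𝔟 > 0`. -/

open ComplexConjugate

section Algebraic

variable (a b c d : ℂ) {n : ℕ}

theorem ucoef_of_even (hn : 1 ≤ n) (he : Even n) :
    ucoef a b c d n = n * (n + 2 * (a + b + c + d) + 2)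
      * ((n + 2 * (a + b) + 1) * (n + 2 * (c + d) + 1)) / (4 * (n + (a + b + c + d) + 1) ^ 2) := by
  obtain ⟨m, rfl⟩ : ∃ m, n = m + 1 := ⟨n - 1, by omega⟩
  have hm : ¬Even m := by simpa [Nat.even_add_one] using he
  simp only [ucoef, Acoef, Ccoef, Nat.add_sub_cancel, if_neg hm, if_pos he]
  rw [show (m : ℂ) + a + b + c + d + 2 = ((m + 1 : ℕ) : ℂ) + (a + b + c + d) + 1 by push_cast; ring,
    show ((m + 1 : ℕ) : ℂ) + a + b + c + d + 1 = ((m + 1 : ℕ) : ℂ) + (a + b + c + d) + 1 by ring]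
  -- `ring` normalizes under `⁻¹`, so the shared denominator must be an atom for it to cancel
  generalize ((m + 1 : ℕ) : ℂ) + (a + b + c + d) + 1 = D
  push_cast
  ring

theorem ucoef_of_odd (hn : 1 ≤ n) (ho : ¬Even n) :
    ucoef a b c d n = (n + 2 * (a + c) + 1) * (n + 2 * (b + d) + 1)
      * ((n + 2 * (a + d) + 1) * (n + 2 * (b + c) + 1)) / (4 * (n + (a + b + c + d) + 1) ^ 2) := by
  obtain ⟨m, rfl⟩ : ∃ m, n = m + 1 := ⟨n - 1, by omega⟩
  have hm : Even m := by simpa [Nat.even_add_one] using ho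
  simp only [ucoef, Acoef, Ccoef, Nat.add_sub_cancel, if_pos hm, if_neg ho]
  rw [show (m : ℂ) + a + b + c + d + 2 = ((m + 1 : ℕ) : ℂ) + (a + b + c + d) + 1 by push_cast; ring,
    show ((m + 1 : ℕ) : ℂ) + a + b + c + d + 1 = ((m + 1 : ℕ) : ℂ) + (a + b + c + d) + 1 by ring]
  generalize ((m + 1 : ℕ) : ℂ) + (a + b + c + d) + 1 = D
  push_cast
  ring

end Algebraic

section Conjugate

variable (a b : ℂ) {n : ℕ}

lemma add_add_conj_add_conj : a + b + conj a + conj b = (a + b) + conj (a + b) := by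
  rw [map_add]
  ring

theorem ucoef_conj_of_even (hn : 1 ≤ n) (he : Even n) :
    ucoef a b (conj a) (conj b) n = ((n * (n + 4 * (a + b).re + 2) * ‖(n : ℂ) + 2 * (a + b) + 1‖ ^ 2
      / (4 * (n + 2 * (a + b).re + 1) ^ 2) : ℝ) : ℂ) := by
  have hconj : (n : ℂ) + 2 * (conj a + conj b) + 1 = conj ((n : ℂ) + 2 * (a + b) + 1) := by
    simp only [map_add, map_mul, map_natCast, map_ofNat, map_one]
  rw [ucoef_of_even _ _ _ _ hn he, hconj, mul_conj', add_add_conj_add_conj, add_conj]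
  push_cast
  ring

theorem ucoef_conj_of_odd (hn : 1 ≤ n) (ho : ¬Even n) :
    ucoef a b (conj a) (conj b) n = ((((n : ℝ) + 4 * a.re + 1) * (n + 4 * b.re + 1)
      * ‖(n : ℂ) + 2 * (a + conj b) + 1‖ ^ 2 / (4 * (n + 2 * (a + b).re + 1) ^ 2) : ℝ) : ℂ) := by
  have hconj : (n : ℂ) + 2 * (b + conj a) + 1 = conj ((n : ℂ) + 2 * (a + conj b) + 1) := by
    simp only [map_add, map_mul, map_natCast, map_ofNat, map_one, conj_conj, add_comm b]
  rw [ucoef_of_odd _ _ _ _ hn ho, hconj, mul_conj', add_conj, add_conj,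
    add_add_conj_add_conj, add_conj]
  push_cast
  ring

end Conjugate

lemma norm_pos_of_re_pos {z : ℂ} (hz : 0 < z.re) : 0 < ‖z‖ :=
  hz.trans_le (re_le_norm z)

lemma im_eq_zero_and_re_pos_of_eq_ofReal {u : ℂ} {r : ℝ} (hu : u = r) (hr : 0 < r) :
    u.im = 0 ∧ 0 < u.re := by
  subst hu
  simpa using hr

theorem ucoef_conj_im_eq_zero_and_re_pos {a b : ℂ} (ha : 0 < a.re) (hb : 0 < b.re) {n : ℕ}
    (hn : 1 ≤ n) :
    (ucoef a b (conj a) (conj b) n).im = 0 ∧ 0 < (ucoef a b (conj a) (conj b) n).re := by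
  have hn' : (0 : ℝ) < n := by exact_mod_cast hn
  rcases em (Even n) with he | ho
  · have hz : 0 < ‖(n : ℂ) + 2 * (a + b) + 1‖ := norm_pos_of_re_pos <| by
      simp only [add_re, natCast_re, mul_re, re_ofNat, im_ofNat, add_im, zero_mul, sub_zero, one_re]
      positivity
    refine im_eq_zero_and_re_pos_of_eq_ofReal (ucoef_conj_of_even a b hn he) ?_
    rw [add_re]
    positivity
  · have hz : 0 < ‖(n : ℂ) + 2 * (a + conj b) + 1‖ := norm_pos_of_re_pos <| by
      simp only [add_re, natCast_re, mul_re, re_ofNat, conj_re, im_ofNat, add_im, conj_im, zero_mul,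
        sub_zero, one_re]
      positivity
    refine im_eq_zero_and_re_pos_of_eq_ofReal (ucoef_conj_of_odd a b hn ho) ?_
    rw [add_re]
    positivity

theorem ucoef_pos_general (α β γ δ : ℝ) (hα : 0 < α) (hγ : 0 < γ)
    (n : ℕ) (hn : 1 ≤ n) :
    (ucoef ((α : ℂ) + β * I) ((γ : ℂ) + δ * I) ((α : ℂ) - β * I) ((γ : ℂ) - δ * I) n).im = 0 ∧
    0 < (ucoef ((α : ℂ) + β * I) ((γ : ℂ) + δ * I) ((α : ℂ) - β * I) ((γ : ℂ) - δ * I) n).re ∧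
    (Even n →
      ucoef ((α : ℂ) + β * I) ((γ : ℂ) + δ * I) ((α : ℂ) - β * I) ((γ : ℂ) - δ * I) n
        = (((n : ℝ) * ((n : ℝ) + 4*α + 4*γ + 2)
            * ‖(n : ℂ) + 2*((α : ℂ) + γ + I*((β : ℂ) + δ)) + 1‖ ^ 2
            / (4 * ((n : ℝ) + 2*α + 2*γ + 1) ^ 2) : ℝ) : ℂ)) ∧
    (¬ Even n →
      ucoef ((α : ℂ) + β * I) ((γ : ℂ) + δ * I) ((α : ℂ) - β * I) ((γ : ℂ) - δ * I) n
        = ((((n : ℝ) + 4*α + 1) * ((n : ℝ) + 4*γ + 1)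
            * ‖(n : ℂ) + 2*((α : ℂ) + γ + I*((β : ℂ) - δ)) + 1‖ ^ 2
            / (4 * ((n : ℝ) + 2*α + 2*γ + 1) ^ 2) : ℝ) : ℂ)) := by
  set a : ℂ := α + β * I
  set b : ℂ := γ + δ * I
  rw [show (α : ℂ) - β * I = conj a by simp [a, sub_eq_add_neg],
    show (γ : ℂ) - δ * I = conj b by simp [b, sub_eq_add_neg]]
  have ha : a.re = α := by simp [a]
  have hb : b.re = γ := by simp [b]
  have hab : (a + b).re = α + γ := by rw [add_re, ha, hb]
  obtain ⟨him, hre⟩ := ucoef_conj_im_eq_zero_and_re_pos (ha ▸ hα) (hb ▸ hγ) hn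
  refine ⟨him, hre, fun he => ?_, fun ho => ?_⟩
  · rw [ucoef_conj_of_even a b hn he, hab,
      show (n : ℂ) + 2 * (a + b) + 1 = n + 2 * ((α : ℂ) + γ + I * ((β : ℂ) + δ)) + 1 by
        simp only [a, b]; ring]
    congr 1
    ring
  · rw [ucoef_conj_of_odd a b hn ho, ha, hb, hab,
      show (n : ℂ) + 2 * (a + conj b) + 1 = n + 2 * ((α : ℂ) + γ + I * ((β : ℂ) - δ)) + 1 by
        simp only [a, b, map_add, map_mul, conj_ofReal, conj_I]; ring]
    congr 1
    ring

/-- With `𝔞 = α+iβ, 𝔟 = γ+iδ, 𝔠 = α-iβ, 𝔡 = γ-iδ` where `α, β, γ, δ > 0`, the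
coefficient `uₙ` is a strictly positive real for every `n ≥ 1`, given explicitly
by `uₙ = n(n+4α+4γ+2)|n+2(α+γ+i(β+δ))+1|²/(4(n+2α+2γ+1)²)` for `n` even and
`uₙ = (n+4α+1)(n+4γ+1)|n+2(α+γ+i(β-δ))+1|²/(4(n+2α+2γ+1)²)` for `n` odd. -/
theorem ucoef_pos (α β γ δ : ℝ) (hα : 0 < α) (hβ : 0 < β) (hγ : 0 < γ) (hδ : 0 < δ)
    (n : ℕ) (hn : 1 ≤ n) :
    (ucoef ((α : ℂ) + β * I) ((γ : ℂ) + δ * I) ((α : ℂ) - β * I) ((γ : ℂ) - δ * I) n).im = 0 ∧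
    0 < (ucoef ((α : ℂ) + β * I) ((γ : ℂ) + δ * I) ((α : ℂ) - β * I) ((γ : ℂ) - δ * I) n).re ∧
    (Even n →
      ucoef ((α : ℂ) + β * I) ((γ : ℂ) + δ * I) ((α : ℂ) - β * I) ((γ : ℂ) - δ * I) n
        = (((n : ℝ) * ((n : ℝ) + 4*α + 4*γ + 2)
            * ‖(n : ℂ) + 2*((α : ℂ) + γ + I*((β : ℂ) + δ)) + 1‖ ^ 2
            / (4 * ((n : ℝ) + 2*α + 2*γ + 1) ^ 2) : ℝ) : ℂ)) ∧
    (¬ Even n →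
      ucoef ((α : ℂ) + β * I) ((γ : ℂ) + δ * I) ((α : ℂ) - β * I) ((γ : ℂ) - δ * I) n
        = ((((n : ℝ) + 4*α + 1) * ((n : ℝ) + 4*γ + 1)
            * ‖(n : ℂ) + 2*((α : ℂ) + γ + I*((β : ℂ) - δ)) + 1‖ ^ 2
            / (4 * ((n : ℝ) + 2*α + 2*γ + 1) ^ 2) : ℝ) : ℂ)) :=
  ucoef_pos_general α β γ δ hα hγ n hn
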